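/- arXiv:2204.05706 — 5 statements merged into one kernel-verified Lean document; each statement's English description precedes it below -/
import Mathlib

section
/- Let χ be the characteristic polynomial of a square matrix M over a field k. The degree of the reciprocal polynomial χ*(x) = x^{deg χ} χ(1/x) equals the rank of the stable power M^N (N large), i.e., deg(χ) minus the multiplicity of 0 as a root of χ. -/
set_option maxHeartbeats 800000

open Polynomial Module

lemma mulVecLin_pow' {k : Type*} [Field k] {n : ℕ} (M : Matrix (Fin n) (Fin n) k) (m : ℕ) :
    (M ^ m).mulVecLin = (M.mulVecLin : Module.End k (Fin n → k)) ^ m := by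
  induction m with
  | zero => rw [pow_zero, pow_zero, Matrix.mulVecLin_one]; rfl
  | succ m ih => rw [pow_succ, pow_succ, Matrix.mulVecLin_mul, ih]; rfl

lemma charpoly_mulVecLin' {k : Type*} [Field k] {n : ℕ} (M : Matrix (Fin n) (Fin n) k) :
    (M.mulVecLin : Module.End k (Fin n → k)).charpoly = M.charpoly := by
  rw [← LinearMap.charpoly_toMatrix (M.mulVecLin : Module.End k (Fin n → k))
    (Pi.basisFun k (Fin n))]
  congr 1
  rw [LinearMap.toMatrix_eq_toMatrix']
  exact LinearMap.toMatrix'_toLin' M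

theorem stmt_2 {k : Type*} [Field k] {n : ℕ} (M : Matrix (Fin n) (Fin n) k) (N : ℕ)
    (hN : ∀ m ≥ N, LinearMap.range (M ^ m).mulVecLin = LinearMap.range (M ^ N).mulVecLin) :
    (M.charpoly.reverse).natDegree = (M ^ N).rank ∧
      (M ^ N).rank = M.charpoly.natDegree - M.charpoly.rootMultiplicity 0 := by
  set φ : Module.End k (Fin n → k) := M.mulVecLin with hφ
  have hfin : finrank k (Fin n → k) = n := by simp
  set m := max N n with hm
  have hker : LinearMap.ker (φ ^ m) = φ.maxGenEigenspace 0 := by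
    have h1 : φ.genEigenspace 0 (m : ℕ∞) = LinearMap.ker (φ ^ m) := by
      rw [Module.End.genEigenspace_nat]; simp
    have h2 : φ.genEigenspace 0 (m : ℕ∞) = φ.genEigenspace 0 (finrank k (Fin n → k) : ℕ∞) :=
      Module.End.genEigenspace_eq_genEigenspace_finrank_of_le φ 0 (by omega)
    rw [← h1, h2, ← Module.End.maxGenEigenspace_eq_genEigenspace_finrank]
  have hkerrank : finrank k (LinearMap.ker (φ ^ m)) = M.charpoly.natTrailingDegree := by
    rw [hker, LinearMap.finrank_maxGenEigenspace_zero_eq, charpoly_mulVecLin']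
  have hrank : (M ^ N).rank = n - M.charpoly.natTrailingDegree := by
    have hRN : (M ^ N).rank = finrank k (LinearMap.range (φ ^ m)) := by
      rw [Matrix.rank, ← hN m (le_max_left _ _), mulVecLin_pow']
    have := LinearMap.finrank_range_add_finrank_ker (φ ^ m)
    rw [hkerrank, hfin] at this
    omega
  have hdeg : M.charpoly.natDegree = n := by rw [M.charpoly_natDegree_eq_dim, Fintype.card_fin]
  have hrm : M.charpoly.rootMultiplicity 0 = M.charpoly.natTrailingDegree :=
    Polynomial.rootMultiplicity_eq_natTrailingDegree'
  have htd : M.charpoly.natTrailingDegree ≤ M.charpoly.natDegree := M.charpoly.natTrailingDegree_le_natDegree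
  have hrev := M.charpoly.natDegree_eq_reverse_natDegree_add_natTrailingDegree
  constructor
  · omega
  · omega
end

section
/- Let M be a square integer matrix. Then M is nilpotent if and only if for every prime p, the reduction of the characteristic polynomial of M modulo p has reciprocal polynomial of degree 0. -/
/-!
Over a reduced ring a matrix is nilpotent iff its characteristic polynomial is `X ^ n`
(Cayley–Hamilton one way; the other way `χ - X ^ n` is nilpotent, hence zero). For a monic
polynomial, a reciprocal of degree 0 means that it is a power of `X`. So the condition says that
`χ - X ^ n` vanishes modulo every prime, i.e. that each of its integer coefficients is divisible by
arbitrarily large primes, hence zero.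
-/

open Polynomial

theorem Int.eq_zero_of_forall_prime_dvd {a : ℤ} (h : ∀ p : ℕ, p.Prime → (p : ℤ) ∣ a) :
    a = 0 := by
  obtain ⟨p, hpa, hp⟩ := Nat.exists_infinite_primes (a.natAbs + 1)
  exact Int.eq_zero_of_dvd_of_natAbs_lt_natAbs (h p hp) (by simp only [Int.natAbs_natCast]; omega)

theorem Polynomial.eq_of_forall_prime_map_zmod_eq {f g : ℤ[X]}
    (h : ∀ p : ℕ, p.Prime →
      f.map (Int.castRingHom (ZMod p)) = g.map (Int.castRingHom (ZMod p))) :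
    f = g := by
  ext i
  rw [← sub_eq_zero]
  refine Int.eq_zero_of_forall_prime_dvd fun p hp => ?_
  rw [← ZMod.intCast_zmod_eq_zero_iff_dvd, Int.cast_sub, sub_eq_zero]
  simpa only [coeff_map, eq_intCast] using congrArg (coeff · i) (h p hp)

theorem Polynomial.Monic.natDegree_reverse_eq_zero_iff {R : Type*} [Semiring R] {p : R[X]}
    (hp : p.Monic) : p.reverse.natDegree = 0 ↔ p = X ^ p.natDegree := by
  rw [hp.eq_X_pow_iff_natTrailingDegree_eq_natDegree, reverse_natDegree, Nat.sub_eq_zero_iff_le]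
  exact ⟨(natTrailingDegree_le_natDegree p).antisymm, Eq.ge⟩

theorem Matrix.isNilpotent_iff_charpoly_eq_X_pow {R n : Type*} [CommRing R] [IsReduced R]
    [Fintype n] [DecidableEq n] (M : Matrix n n R) :
    IsNilpotent M ↔ M.charpoly = X ^ Fintype.card n := by
  refine ⟨fun hM => sub_eq_zero.mp <| Polynomial.ext fun i => ?_,
    fun h => ⟨Fintype.card n, ?_⟩⟩
  · have hnil := isNilpotent_charpoly_sub_pow_of_isNilpotent hM
    exact (Polynomial.isNilpotent_iff.mp hnil i).eq_zero
  · rw [← aeval_X_pow (R := R), ← h, aeval_self_charpoly]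

theorem exists_pow_pos_eq_zero_iff_isNilpotent {R : Type*} [MonoidWithZero R] {x : R} :
    (∃ k ≥ 1, x ^ k = 0) ↔ IsNilpotent x :=
  ⟨fun ⟨k, _, hk⟩ => ⟨k, hk⟩,
    fun ⟨k, hk⟩ => ⟨k + 1, Nat.le_add_left 1 k, by rw [pow_succ, hk, zero_mul]⟩⟩

theorem stmt_5 {n : ℕ} (M : Matrix (Fin n) (Fin n) ℤ) :
    (∃ k ≥ 1, M ^ k = 0) ↔
      ∀ p : ℕ, p.Prime →
        ((M.charpoly.map (Int.castRingHom (ZMod p))).reverse).natDegree = 0 := by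
  have hreduce (p : ℕ) (hp : p.Prime) :
      ((M.charpoly.map (Int.castRingHom (ZMod p))).reverse).natDegree = 0 ↔
        M.charpoly.map (Int.castRingHom (ZMod p)) = X ^ n := by
    have : Fact p.Prime := ⟨hp⟩
    rw [(M.charpoly_monic.map _).natDegree_reverse_eq_zero_iff, M.charpoly_monic.natDegree_map,
      M.charpoly_natDegree_eq_dim, Fintype.card_fin]
  rw [exists_pow_pos_eq_zero_iff_isNilpotent, M.isNilpotent_iff_charpoly_eq_X_pow,
    Fintype.card_fin]
  refine ⟨fun h p hp => (hreduce p hp).mpr (by rw [h, Polynomial.map_pow, map_X]),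
    fun h => eq_of_forall_prime_map_zmod_eq fun p hp => ?_⟩
  rw [(hreduce p hp).mp (h p hp), Polynomial.map_pow, map_X]
end

section
/- Let ψ be a continuous idempotent endomorphism of a profinite group F generated (topologically) by a subset A. Then the kernel of ψ equals the closed normal subgroup of F generated by the set {ψ(a)a^{-1} : a ∈ A}; in particular the image of ψ is isomorphic to F modulo this closed normal subgroup. -/
/-!
Since `ψ` is idempotent, every `ψ a * a⁻¹` lies in the closed normal subgroup `ker ψ`, which
therefore contains `N`, the closed normal subgroup generated by these elements. Conversely, the
projection `π : F → F ⧸ N` satisfies `π ∘ ψ = π` on `A`, hence on all of `F` since both sides are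
continuous homomorphisms and `A` topologically generates `F`; so `ψ x = 1` forces `π x = 1`.
-/

namespace MonoidHom

theorem mul_inv_mem_ker_of_comp_self {G : Type*} [Group G] {ψ : G →* G} (hidem : ψ.comp ψ = ψ)
    (a : G) : ψ a * a⁻¹ ∈ ψ.ker := by
  rw [mem_ker, map_mul, map_inv, ← comp_apply, hidem, mul_inv_cancel]

variable {G H : Type*} [Group G] [TopologicalSpace G] [IsTopologicalGroup G]

theorem eq_of_eqOn_topologicalClosure_eq_top [Group H] [TopologicalSpace H] [T2Space H]
    {A : Set G} (hA : (Subgroup.closure A).topologicalClosure = ⊤) {f g : G →* H}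
    (hf : Continuous f) (hg : Continuous g) (h : A.EqOn f g) : f = g := by
  have hcl := (eqOn_closure h).closure hf hg
  rw [← Subgroup.topologicalClosure_coe, hA] at hcl
  exact ext fun x => hcl trivial

theorem topologicalClosure_normalClosure_le_ker [Group H] [TopologicalSpace H] [T1Space H]
    {f : G →* H} (hf : Continuous f) {S : Set G} (hS : S ⊆ f.ker) :
    (Subgroup.normalClosure S).topologicalClosure ≤ f.ker :=
  Subgroup.topologicalClosure_minimal _ (Subgroup.normalClosure_le_normal hS)
    (isClosed_singleton.preimage hf)

theorem ker_le_of_mul_inv_mem {A : Set G} (hA : (Subgroup.closure A).topologicalClosure = ⊤)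
    {ψ : G →* G} (hψ : Continuous ψ) {N : Subgroup G} [N.Normal] [IsClosed (N : Set G)]
    (hAN : ∀ a ∈ A, ψ a * a⁻¹ ∈ N) : ψ.ker ≤ N := by
  set π := QuotientGroup.mk' N
  have hπ : Continuous π := continuous_quot_mk
  have hπψ : π.comp ψ = π := eq_of_eqOn_topologicalClosure_eq_top hA (hπ.comp hψ) hπ
    fun a ha => QuotientGroup.eq_iff_div_mem.2 <| by rw [div_eq_mul_inv]; exact hAN a ha
  intro x hx
  rw [← QuotientGroup.eq_one_iff]
  calc (x : G ⧸ N) = π (ψ x) := (DFunLike.congr_fun hπψ x).symm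
    _ = 1 := by rw [mem_ker.1 hx, map_one]

end MonoidHom

theorem stmt_10_general {F : Type*} [Group F] [TopologicalSpace F] [IsTopologicalGroup F]
    [T2Space F]
    (A : Set F) (hA : (Subgroup.closure A).topologicalClosure = ⊤)
    (ψ : F →* F) (hcont : Continuous ψ) (hidem : ψ.comp ψ = ψ) :
    MonoidHom.ker ψ =
        (Subgroup.normalClosure {x | ∃ a ∈ A, x = ψ a * a⁻¹}).topologicalClosure ∧
      (letI := (Subgroup.is_normal_topologicalClosure
          (Subgroup.normalClosure {x | ∃ a ∈ A, x = ψ a * a⁻¹}));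
        Nonempty
          ((F ⧸ (Subgroup.normalClosure {x | ∃ a ∈ A, x = ψ a * a⁻¹}).topologicalClosure) ≃*
            MonoidHom.range ψ)) := by
  set N := (Subgroup.normalClosure {x | ∃ a ∈ A, x = ψ a * a⁻¹}).topologicalClosure
  have : N.Normal := Subgroup.is_normal_topologicalClosure _
  have : IsClosed (N : Set F) := Subgroup.isClosed_topologicalClosure _
  have hker : ψ.ker = N := le_antisymm
    (MonoidHom.ker_le_of_mul_inv_mem hA hcont
      fun a ha => Subgroup.le_topologicalClosure _ (Subgroup.subset_normalClosure ⟨a, ha, rfl⟩))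
    (MonoidHom.topologicalClosure_normalClosure_le_ker hcont <| by
      rintro _ ⟨a, -, rfl⟩
      exact MonoidHom.mul_inv_mem_ker_of_comp_self hidem a)
  exact ⟨hker, ⟨(QuotientGroup.quotientMulEquivOfEq hker.symm).trans
    (QuotientGroup.quotientKerEquivRange ψ)⟩⟩

theorem stmt_10 {F : Type*} [Group F] [TopologicalSpace F] [IsTopologicalGroup F]
    [CompactSpace F] [TotallyDisconnectedSpace F] [T2Space F]
    (A : Set F) (hA : (Subgroup.closure A).topologicalClosure = ⊤)
    (ψ : F →* F) (hcont : Continuous ψ) (hidem : ψ.comp ψ = ψ) :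
    MonoidHom.ker ψ =
        (Subgroup.normalClosure {x | ∃ a ∈ A, x = ψ a * a⁻¹}).topologicalClosure ∧
      (letI := (Subgroup.is_normal_topologicalClosure
          (Subgroup.normalClosure {x | ∃ a ∈ A, x = ψ a * a⁻¹}));
        Nonempty
          ((F ⧸ (Subgroup.normalClosure {x | ∃ a ∈ A, x = ψ a * a⁻¹}).topologicalClosure) ≃*
            MonoidHom.range ψ)) :=
  stmt_10_general A hA ψ hcont hidem
end

section
/- A topologically finitely generated profinite group G is projective if and only if there exists a continuous idempotent endomorphism ψ of a free profinite group F of finite rank such that G is isomorphic (as topological group) to the image of ψ. -/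
/-- A profinite group is projective when every continuous homomorphism to a profinite
group lifts along any continuous surjection of profinite groups. -/
def IsProjectiveProfinite (G : Type) [Group G] [TopologicalSpace G] : Prop :=
  ∀ (H K : Type) [Group H] [TopologicalSpace H] [IsTopologicalGroup H] [CompactSpace H]
    [TotallyDisconnectedSpace H] [T2Space H]
    [Group K] [TopologicalSpace K] [IsTopologicalGroup K] [CompactSpace K]
    [TotallyDisconnectedSpace K] [T2Space K]
    (φ : G →* H) (ψ : K →* H), Continuous φ → Continuous ψ → Function.Surjective ψ →
      ∃ φ' : G →* K, Continuous φ' ∧ ψ.comp φ' = φ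

/-- `F` is a free profinite group on the finite family `ι : Fin n → F`: every map from
`Fin n` to a profinite group extends uniquely to a continuous homomorphism. -/
def IsFreeProfiniteOn {n : ℕ} (F : Type) [Group F] [TopologicalSpace F]
    (ι : Fin n → F) : Prop :=
  ∀ (H : Type) [Group H] [TopologicalSpace H] [IsTopologicalGroup H] [CompactSpace H]
    [TotallyDisconnectedSpace H] [T2Space H] (f : Fin n → H),
      ∃! φ : F →* H, Continuous φ ∧ ∀ i, φ (ι i) = f i

/-!
A free profinite group of finite rank is projective (lift the images of the generators one by
one), and a continuous retract of a projective group is projective; since an idempotent `ψ`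
retracts `F` onto its range, this gives one direction. Conversely, if `G` is topologically
generated by `n` elements, the free profinite group of rank `n`, realised as the profinite
completion of the free group, maps onto `G` by some `π`; projectivity yields a continuous section
`σ`, and `σ ∘ π` is an idempotent whose range `σ(G)` is isomorphic to `G`.
-/

open CategoryTheory

universe u

namespace ProfiniteGrp.ProfiniteCompletion

variable {Γ : GrpCat.{u}} {H : Type u} [Group H] [TopologicalSpace H] [IsTopologicalGroup H]
  [CompactSpace H] [TotallyDisconnectedSpace H] [T2Space H]

theorem existsUnique_continuous_comp_eta (f : Γ →* H) :
    ∃! φ : completion Γ →* H, Continuous φ ∧ φ.comp (eta Γ).hom = f := by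
  let φ := (lift (P := ProfiniteGrp.of H) (GrpCat.ofHom f)).hom
  have hφf : φ.toMonoidHom.comp (eta Γ).hom = f := by
    ext x
    exact ConcreteCategory.congr_hom (lift_eta (P := ProfiniteGrp.of H) (GrpCat.ofHom f)) x
  refine ⟨φ, ⟨φ.continuous, hφf⟩, fun φ' ⟨hφ', hφ'f⟩ => ?_⟩
  refine DFunLike.coe_injective ((denseRange Γ).equalizer hφ' φ.continuous ?_)
  exact congrArg DFunLike.coe (hφ'f.trans hφf.symm)

end ProfiniteGrp.ProfiniteCompletion

open ProfiniteGrp.ProfiniteCompletion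

abbrev FreeProfiniteGroup (n : ℕ) : ProfiniteGrp := completion (GrpCat.of (FreeGroup (Fin n)))

namespace FreeProfiniteGroup

def of {n : ℕ} (i : Fin n) : FreeProfiniteGroup n := etaFn _ (FreeGroup.of i)

theorem isFreeProfiniteOn (n : ℕ) : IsFreeProfiniteOn (FreeProfiniteGroup n) of := by
  intro H _ _ _ _ _ _ f
  refine (existsUnique_congr fun φ => and_congr_right' ?_).mp
    (existsUnique_continuous_comp_eta (FreeGroup.lift f))
  rw [FreeGroup.ext_hom_iff]
  simp only [MonoidHom.comp_apply, FreeGroup.lift_apply_of]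
  rfl

end FreeProfiniteGroup

theorem IsFreeProfiniteOn.isProjectiveProfinite {n : ℕ} {F : Type} [Group F]
    [TopologicalSpace F] {ι : Fin n → F} (hF : IsFreeProfiniteOn F ι) :
    IsProjectiveProfinite F := by
  intro H K _ _ _ _ _ _ _ _ _ _ _ _ φ ψ hφ hψ hψsurj
  choose k hk using fun i => hψsurj (φ (ι i))
  obtain ⟨φ', ⟨hφ', hφ'ι⟩, -⟩ := hF K k
  refine ⟨φ', hφ', (hF H fun i => φ (ι i)).unique ⟨hψ.comp hφ', fun i => ?_⟩
    ⟨hφ, fun _ => rfl⟩⟩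
  simp [hφ'ι, hk]

theorem IsProjectiveProfinite.of_comp_eq_id {F G : Type} [Group F] [TopologicalSpace F]
    [Group G] [TopologicalSpace G] (hF : IsProjectiveProfinite F) {r : F →* G} {s : G →* F}
    (hr : Continuous r) (hs : Continuous s) (hrs : r.comp s = MonoidHom.id G) :
    IsProjectiveProfinite G := by
  intro H K _ _ _ _ _ _ _ _ _ _ _ _ φ ψ hφ hψ hψsurj
  obtain ⟨φ', hφ', hψφ'⟩ := hF H K (φ.comp r) ψ (hφ.comp hr) hψ hψsurj
  refine ⟨φ'.comp s, hφ'.comp hs, ?_⟩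
  rw [← MonoidHom.comp_assoc, hψφ', MonoidHom.comp_assoc, hrs, MonoidHom.comp_id]

section Retraction

variable {F G : Type*} [Group F] [Group G]

theorem MonoidHom.surjective_of_topologicalClosure_closure_eq_top [TopologicalSpace F]
    [CompactSpace F] [TopologicalSpace G] [IsTopologicalGroup G] [T2Space G] {π : F →* G}
    (hπ : Continuous π) {S : Set G} (hS : (Subgroup.closure S).topologicalClosure = ⊤)
    (hSπ : S ⊆ Set.range π) : Function.Surjective π := by
  rw [← MonoidHom.range_eq_top, eq_top_iff, ← hS]
  exact Subgroup.topologicalClosure_minimal _ ((Subgroup.closure_le _).mpr hSπ)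
    (isCompact_range hπ).isClosed

theorem MonoidHom.comp_idempotent_of_comp_eq_id {π : F →* G} {σ : G →* F}
    (h : π.comp σ = MonoidHom.id G) : (σ.comp π).comp (σ.comp π) = σ.comp π := by
  rw [MonoidHom.comp_assoc, ← MonoidHom.comp_assoc π, h, MonoidHom.id_comp]

theorem MonoidHom.range_comp_of_comp_eq_id {π : F →* G} {σ : G →* F}
    (h : π.comp σ = MonoidHom.id G) : (σ.comp π).range = σ.range := by
  rw [MonoidHom.range_comp, MonoidHom.range_eq_top.mpr, ← MonoidHom.range_eq_map]
  exact Function.RightInverse.surjective (DFunLike.congr_fun h)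

theorem MonoidHom.rangeRestrict_coe_of_comp_self {ψ : F →* F} (h : ψ.comp ψ = ψ)
    (y : ψ.range) : ψ.rangeRestrict y = y := by
  obtain ⟨_, z, rfl⟩ := y
  exact Subtype.ext (DFunLike.congr_fun h z)

end Retraction

theorem stmt_12 (G : Type) [Group G] [TopologicalSpace G] [IsTopologicalGroup G]
    [CompactSpace G] [TotallyDisconnectedSpace G] [T2Space G]
    (hfg : ∃ S : Set G, S.Finite ∧ (Subgroup.closure S).topologicalClosure = ⊤) :
    IsProjectiveProfinite G ↔
      ∃ (n : ℕ) (F : Type) (_ : Group F) (_ : TopologicalSpace F),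
        IsTopologicalGroup F ∧ CompactSpace F ∧ TotallyDisconnectedSpace F ∧ T2Space F ∧
        ∃ (ι : Fin n → F) (ψ : F →* F),
          IsFreeProfiniteOn F ι ∧ Continuous ψ ∧ ψ.comp ψ = ψ ∧
          ∃ e : G ≃* MonoidHom.range ψ, Continuous e ∧ Continuous e.symm := by
  constructor
  · intro hG
    obtain ⟨S, hSfin, hS⟩ := hfg
    obtain ⟨n, g, -, rfl⟩ := hSfin.fin_param
    obtain ⟨π, ⟨hπ, hπg⟩, -⟩ := FreeProfiniteGroup.isFreeProfiniteOn n G g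
    have hπsurj : Function.Surjective π :=
      π.surjective_of_topologicalClosure_closure_eq_top hπ hS
        fun _ ⟨i, hi⟩ => ⟨_, (hπg i).trans hi⟩
    obtain ⟨σ, hσ, hπσ⟩ := hG G _ (MonoidHom.id G) π continuous_id hπ hπsurj
    refine ⟨n, FreeProfiniteGroup n, _, _, inferInstance, inferInstance, inferInstance,
      inferInstance, FreeProfiniteGroup.of, σ.comp π, FreeProfiniteGroup.isFreeProfiniteOn n,
      hσ.comp hπ, MonoidHom.comp_idempotent_of_comp_eq_id hπσ, ?_⟩
    refine ⟨(MonoidHom.ofLeftInverse (DFunLike.congr_fun hπσ)).trans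
      (MulEquiv.subgroupCongr (MonoidHom.range_comp_of_comp_eq_id hπσ).symm), ?_, ?_⟩
    · exact continuous_induced_rng.2 hσ
    · exact hπ.comp continuous_subtype_val
  · rintro ⟨n, F, _, _, _, _, _, _, ι, ψ, hF, hψ, hψψ, e, he, he'⟩
    refine hF.isProjectiveProfinite.of_comp_eq_id (r := e.symm.toMonoidHom.comp ψ.rangeRestrict)
      (s := ψ.range.subtype.comp e.toMonoidHom) (he'.comp (hψ.subtype_mk _))
      (continuous_subtype_val.comp he) ?_
    ext x
    simp [MonoidHom.rangeRestrict_coe_of_comp_self hψψ]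
end

section
/- The matrices u = [[1,1],[1,0]] and v = [[0,1],[1,g]] over F₄ (g a generator of F₄ˣ) generate SL₂(F₄). -/
/-!
The products `u v` and `v u` are the transvections with entry `g + 1 = g² ≠ 0` above and below
the diagonal, and `u v³ u = diag(g², g)`. Conjugation by `diag(a, a⁻¹)` multiplies the entry of
an upper transvection by `a²` and that of a lower one by `a⁻²`. Since `(g²)² = g` generates
`F₄ˣ`, every transvection lies in `⟨u, v⟩`, and transvections generate `SL₂` of a field.
-/

open Matrix.SpecialLinearGroup
open scoped MatrixGroups

theorem MulAction.smul_mem_of_forall_mem_zpowers {G α : Type*} [Group G] [MulAction G α]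
    {c : G} (hc : ∀ g : G, g ∈ Subgroup.zpowers c) {S : Set α}
    (hS : ∀ x ∈ S, c • x ∈ S) (hS_inv : ∀ x ∈ S, c⁻¹ • x ∈ S) {x : α} (hx : x ∈ S) (g : G) :
    g • x ∈ S := by
  obtain ⟨n, rfl⟩ := Subgroup.mem_zpowers_iff.mp (hc g)
  induction n using Int.induction_on generalizing x with
  | zero => simpa using hx
  | succ n ih => simpa [_root_.zpow_add_one, mul_smul] using ih (hS x hx)
  | pred n ih => simpa [_root_.zpow_sub_one, mul_smul] using ih (hS_inv x hx)

namespace Matrix.SpecialLinearGroup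

variable {K : Type*} [Field K]

lemma transvection_zero_one_coe (b : K) :
    (transvection zero_ne_one b : SL(2, K)).1 = !![1, b; 0, 1] := by
  ext i j; fin_cases i <;> fin_cases j <;> simp [transvection_coe]

lemma transvection_one_zero_coe (b : K) :
    (transvection one_ne_zero b : SL(2, K)).1 = !![1, 0; b, 1] := by
  ext i j; fin_cases i <;> fin_cases j <;> simp [transvection_coe]

lemma diag2_mul_transvection_zero_one_mul_inv (a : K) (ha : a ≠ 0) (b : K) :
    diag2 a ha * transvection zero_ne_one b * (diag2 a ha)⁻¹ =
      transvection zero_ne_one (a ^ 2 * b) := by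
  rw [diag2_inv]
  ext i j
  fin_cases i <;> fin_cases j <;> simp [diag2_coe', transvection_zero_one_coe] <;> field_simp

lemma diag2_mul_transvection_one_zero_mul_inv (a : K) (ha : a ≠ 0) (b : K) :
    diag2 a ha * transvection one_ne_zero b * (diag2 a ha)⁻¹ =
      transvection one_ne_zero (a⁻¹ ^ 2 * b) := by
  rw [diag2_inv]
  ext i j
  fin_cases i <;> fin_cases j <;> simp [diag2_coe', transvection_one_zero_coe] <;> field_simp

lemma transvection_mem_of_forall_mul_mem {H : Subgroup SL(2, K)} {i j : Fin 2} (hij : i ≠ j)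
    {c : Kˣ} (hc : ∀ x : Kˣ, x ∈ Subgroup.zpowers c)
    (hmul : ∀ b, transvection hij b ∈ H → transvection hij (c * b) ∈ H)
    (hmul_inv : ∀ b, transvection hij b ∈ H → transvection hij (↑c⁻¹ * b) ∈ H)
    {b₀ : K} (hb₀ : b₀ ≠ 0) (hb₀H : transvection hij b₀ ∈ H) (b : K) :
    transvection hij b ∈ H := by
  rcases eq_or_ne b 0 with rfl | hb
  · rw [transvection_coeff_zero]
    exact H.one_mem
  · have := MulAction.smul_mem_of_forall_mem_zpowers (S := {b | transvection hij b ∈ H})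
      hc hmul hmul_inv hb₀H (Units.mk0 b hb * (Units.mk0 b₀ hb₀)⁻¹)
    simpa [Units.smul_def, hb₀] using this

theorem eq_top_of_diag2_mem {H : Subgroup SL(2, K)} {a : Kˣ}
    (hgen : ∀ x : Kˣ, x ∈ Subgroup.zpowers (a ^ 2)) (hdiag : diag2 (a : K) a.ne_zero ∈ H)
    {b b' : K} (hb : b ≠ 0) (hb' : b' ≠ 0)
    (hbH : transvection zero_ne_one b ∈ H) (hb'H : transvection one_ne_zero b' ∈ H) :
    H = ⊤ := by
  have hdiag_inv : diag2 ((a⁻¹ : Kˣ) : K) (a⁻¹).ne_zero ∈ H := by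
    simpa [diag2_inv] using H.inv_mem hdiag
  have hgen_inv : ∀ x : Kˣ, x ∈ Subgroup.zpowers (a ^ 2)⁻¹ := by
    simpa [Subgroup.zpowers_inv] using hgen
  have hupper := transvection_mem_of_forall_mul_mem zero_ne_one hgen
    (fun x hx ↦ by
      simpa [diag2_mul_transvection_zero_one_mul_inv] using
        H.mul_mem (H.mul_mem hdiag hx) (H.inv_mem hdiag))
    (fun x hx ↦ by
      simpa [diag2_mul_transvection_zero_one_mul_inv] using
        H.mul_mem (H.mul_mem hdiag_inv hx) (H.inv_mem hdiag_inv)) hb hbH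
  have hlower := transvection_mem_of_forall_mul_mem one_ne_zero hgen_inv
    (fun x hx ↦ by
      simpa [diag2_mul_transvection_one_zero_mul_inv] using
        H.mul_mem (H.mul_mem hdiag hx) (H.inv_mem hdiag))
    (fun x hx ↦ by
      simpa [diag2_mul_transvection_one_zero_mul_inv] using
        H.mul_mem (H.mul_mem hdiag_inv hx) (H.inv_mem hdiag_inv)) hb' hb'H
  refine eq_top_iff.mpr fun A _ ↦ SL2.transvection_induction (· ∈ H) ?_ (fun _ _ ↦ H.mul_mem) A
  intro i j hij c
  fin_cases i <;> fin_cases j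
  all_goals first | exact absurd rfl hij | exact hupper c | exact hlower c

end Matrix.SpecialLinearGroup

lemma GaloisField.orderOf_eq_of_forall_mem_zpowers (p : ℕ) [Fact p.Prime] {n : ℕ} (hn : n ≠ 0)
    {g : (GaloisField p n)ˣ} (hg : ∀ x, x ∈ Subgroup.zpowers g) : orderOf g = p ^ n - 1 := by
  rw [orderOf_eq_card_of_forall_mem_zpowers hg, Nat.card_units, GaloisField.card p n hn]

lemma sq_add_self_add_one_eq_zero_of_orderOf_eq_three {K : Type*} [Field K] {g : Kˣ}
    (h : orderOf g = 3) : (g : K) ^ 2 + g + 1 = 0 := by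
  have := (IsPrimitiveRoot.coe_units_iff.mpr (h ▸ IsPrimitiveRoot.orderOf g)).geom_sum_eq_zero
    (by norm_num)
  simp only [Finset.sum_range_succ, Finset.sum_range_zero, pow_zero, pow_one, zero_add] at this
  linear_combination this

theorem stmt_17 (g : (GaloisField 2 2)ˣ)
    (hg : ∀ x : (GaloisField 2 2)ˣ, x ∈ Subgroup.zpowers g)
    (u v : Matrix.SpecialLinearGroup (Fin 2) (GaloisField 2 2))
    (hu : (u : Matrix (Fin 2) (Fin 2) (GaloisField 2 2)) = !![1, 1; 1, 0])
    (hv : (v : Matrix (Fin 2) (Fin 2) (GaloisField 2 2)) = !![0, 1; 1, (g : GaloisField 2 2)]) :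
    Subgroup.closure {u, v} = ⊤ := by
  have hord : orderOf g = 3 := GaloisField.orderOf_eq_of_forall_mem_zpowers 2 two_ne_zero hg
  have hg2 := sq_add_self_add_one_eq_zero_of_orderOf_eq_three hord
  have hgen : ∀ x, x ∈ Subgroup.zpowers ((g ^ 2) ^ 2) := by
    rwa [← pow_mul, show g ^ (2 * 2) = g by rw [pow_succ', ← hord, pow_orderOf_eq_one, mul_one]]
  have hg1 : 1 + (g : GaloisField 2 2) ≠ 0 := by
    rw [show 1 + (g : GaloisField 2 2) = -g ^ 2 by linear_combination hg2]
    exact neg_ne_zero.mpr (pow_ne_zero 2 g.ne_zero)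
  have huv : u * v = transvection zero_ne_one (1 + (g : GaloisField 2 2)) := by
    ext i j
    fin_cases i <;> fin_cases j <;> simp [hu, hv, transvection_zero_one_coe]
  have hvu : v * u = transvection one_ne_zero (1 + (g : GaloisField 2 2)) := by
    ext i j
    fin_cases i <;> fin_cases j <;> simp [hu, hv, transvection_one_zero_coe]
  -- `grind` reduces the entries using `g² + g + 1 = 0` and characteristic 2.
  have hdiag : u * v * v * v * u =
      diag2 ((g ^ 2 : (GaloisField 2 2)ˣ) : GaloisField 2 2) (g ^ 2).ne_zero := by
    ext i j
    fin_cases i <;> fin_cases j <;> simp [hu, hv, diag2_coe'] <;> grind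
  have hu_mem : u ∈ Subgroup.closure {u, v} := Subgroup.subset_closure (by simp)
  have hv_mem : v ∈ Subgroup.closure {u, v} := Subgroup.subset_closure (by simp)
  refine eq_top_of_diag2_mem hgen ?_ hg1 hg1 (huv ▸ mul_mem hu_mem hv_mem)
    (hvu ▸ mul_mem hv_mem hu_mem)
  rw [← hdiag]
  exact mul_mem (mul_mem (mul_mem (mul_mem hu_mem hv_mem) hv_mem) hv_mem) hu_mem
end
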